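/- arXiv:1110.5947 — 4 statements merged into one kernel-verified Lean document; each statement's English description precedes it below -/
import Mathlib

section
/- Let A₀ ←^{w₁} F₁, A₁ ←^{w₂} F₂ etc. be the following setup of abelian groups: a commutative diagram with an exact top row A_M →^{a_{M-1}} ⋯ → A₂ →^{a₁} A₁ →^{a₀} A₀ → 0, surjective vertical maps w_k : F_k → A_k (1 ≤ k ≤ M) with p_k : F_{k+1} → F_k satisfying w_k ∘ p_k = a_k ∘ w_{k+1}, and F₁ mapping to A₀ via b₀ := a₀ ∘ w₁. Define b₁ := p₁ − i₁ : F₂ ⊕ Ker w₁ → F₁ (where i₁ is the inclusion) and b_k := (i_k ⊕ p_{k-1}) ∘ (p_k − i_k) : F_{k+1} ⊕ Ker w_k → F_k ⊕ Ker w_{k-1} for k ≥ 2. Then the sequence F_M ⊕ Ker w_{M-1} → ⋯ → F₂ ⊕ Ker w₁ →^{b₁} F₁ →^{b₀} A₀ → 0 is a complex that is exact at A₀, at F₁, and at each term F_{k+1} ⊕ Ker w_k for 1 ≤ k ≤ M−3. -/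
/-!
Everything reduces to one diagram chase in a commutative square `w ∘ p = a ∘ w'` with `w'`
surjective and `A' →a A →a' A''` exact: if `a' (w ξ) = 0`, lift `w ξ = a y` to `y = w' ζ`, and then
`τ := p ζ - ξ` lies in `Ker w`, so `ξ = p ζ - τ`. At `F₁` this is exactness; at
`F_{k+1} ⊕ Ker w_k` a cycle `(ξ, η)` has `η = p_k ξ`, so `a_k (w_{k+1} ξ) = w_k η = 0` and the same
chase one step higher produces the preimage.
-/

section DiagramChase

variable {F F' A A' A'' : Type*} [AddCommGroup F] [AddCommGroup F'] [AddCommGroup A]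
  [AddCommGroup A'] [AddCommGroup A'']
  (p : F' →+ F) (w : F →+ A) (w' : F' →+ A') (a : A' →+ A) (a' : A →+ A'')

theorem exists_eq_sub_of_map_eq_zero (hcomm : ∀ ζ, w (p ζ) = a (w' ζ))
    (hexact : ∀ x, a' x = 0 → ∃ y, a y = x) (hw' : Function.Surjective w')
    {ξ : F} (hξ : a' (w ξ) = 0) : ∃ ζ τ, w τ = 0 ∧ ξ = p ζ - τ := by
  obtain ⟨y, hy⟩ := hexact _ hξ
  obtain ⟨ζ, rfl⟩ := hw' y
  refine ⟨ζ, p ζ - ξ, ?_, (sub_sub_cancel _ _).symm⟩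
  rw [map_sub, hcomm, hy, sub_self]

theorem map_map_sub_eq_zero (hcomm : ∀ ζ, w (p ζ) = a (w' ζ))
    (hcomplex : ∀ y, a' (a y) = 0) (ζ : F') {τ : F} (hτ : w τ = 0) :
    a' (w (p ζ - τ)) = 0 := by
  rw [map_sub, hτ, sub_zero, hcomm, hcomplex]

end DiagramChase

/-- the diagram-chase core of the amalgamation of resolutions.  Given an exact
row `A_M → ⋯ → A₂ → A₁ → A₀ → 0` of abelian groups, surjections `w_k : F_k → A_k` and maps
`p_k : F_{k+1} → F_k` with `w_k ∘ p_k = a_k ∘ w_{k+1}`, the amalgamated sequence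
`F_M ⊕ Ker w_{M-1} → ⋯ → F₂ ⊕ Ker w₁ →^{b₁} F₁ →^{b₀} A₀ → 0`, with
`b₀ = a₀ ∘ w₁`, `b₁(ξ, η) = p₁ ξ − η` and `b_k(ξ, η) = (p_k ξ − η, p_{k-1}(p_k ξ − η))`,
is a complex which is exact at `A₀`, at `F₁`, and at each `F_{k+1} ⊕ Ker w_k` for
`1 ≤ k ≤ M − 3`. -/
theorem stmt_7 (M : ℕ) (hM : 3 ≤ M)
    (A : ℕ → Type*) [∀ k, AddCommGroup (A k)]
    (F : ℕ → Type*) [∀ k, AddCommGroup (F k)]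
    (a : ∀ k, A (k + 1) →+ A k)
    (w : ∀ k, F k →+ A k)
    (p : ∀ k, F (k + 1) →+ F k)
    -- the row `A_M → ⋯ → A₀ → 0` is exact:
    (hsurj0 : Function.Surjective (a 0))
    (hcomplex : ∀ k, k + 2 ≤ M → ∀ y : A (k + 2), a k (a (k + 1) y) = 0)
    (hexact : ∀ k, k + 2 ≤ M → ∀ x : A (k + 1), a k x = 0 → ∃ y : A (k + 2), a (k + 1) y = x)
    -- the vertical maps `w_k` are surjective for `1 ≤ k ≤ M`:
    (hwsurj : ∀ k, 1 ≤ k → k ≤ M → Function.Surjective (w k))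
    -- commutativity `w_k ∘ p_k = a_k ∘ w_{k+1}`:
    (hcomm : ∀ k, 1 ≤ k → k + 1 ≤ M → ∀ ξ : F (k + 1), w k (p k ξ) = a k (w (k + 1) ξ)) :
    -- exactness at `A₀` (surjectivity of `b₀ = a₀ ∘ w₁`):
    (∀ x : A 0, ∃ ξ : F 1, a 0 (w 1 ξ) = x) ∧
    -- the sequence is a complex at `F₁` and exactness at `F₁`:
    ({ξ : F 1 | a 0 (w 1 ξ) = 0} =
      {ξ : F 1 | ∃ (ζ : F 2) (η : F 1), w 1 η = 0 ∧ ξ = p 1 ζ - η}) ∧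
    -- exactness (and the complex property) at `F_{k+1} ⊕ Ker w_k` for `1 ≤ k ≤ M - 3`:
    (∀ k, 1 ≤ k → k ≤ M - 3 → ∀ (ξ : F (k + 1)) (η : F k), w k η = 0 →
      (p k ξ - η = 0 ↔
        ∃ (ζ : F (k + 2)) (τ : F (k + 1)), w (k + 1) τ = 0 ∧
          ξ = p (k + 1) ζ - τ ∧ η = p k (p (k + 1) ζ - τ))) := by
  refine ⟨hsurj0.comp (hwsurj 1 le_rfl (by omega)), ?_, ?_⟩
  · ext ξ
    constructor
    · exact exists_eq_sub_of_map_eq_zero (p 1) (w 1) (w 2) (a 1) (a 0)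
        (hcomm 1 le_rfl (by omega)) (hexact 0 (by omega)) (hwsurj 2 (by omega) (by omega))
    · rintro ⟨ζ, η, hη, rfl⟩
      exact map_map_sub_eq_zero (p 1) (w 1) (w 2) (a 1) (a 0)
        (hcomm 1 le_rfl (by omega)) (hcomplex 0 (by omega)) ζ hη
  · intro k hk1 hk3 ξ η hη
    constructor
    · intro hcycle
      have hηξ : η = p k ξ := (sub_eq_zero.mp hcycle).symm
      have hξ : a k (w (k + 1) ξ) = 0 := by rw [← hcomm k hk1 (by omega), ← hηξ, hη]
      obtain ⟨ζ, τ, hτ, hξζ⟩ := exists_eq_sub_of_map_eq_zero (p (k + 1)) (w (k + 1)) (w (k + 2))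
        (a (k + 1)) (a k) (hcomm (k + 1) (by omega) (by omega)) (hexact k (by omega))
        (hwsurj (k + 2) (by omega) (by omega)) hξ
      exact ⟨ζ, τ, hτ, hξζ, hξζ ▸ hηξ⟩
    · rintro ⟨ζ, τ, -, rfl, rfl⟩
      exact sub_self _
end

section
/- Let p : X → X₀ be a regular covering of a connected complex manifold with deck transformation group G, let 𝔞 ⊂ ℓ∞(G) be a closed unital right-translation-invariant subalgebra, and let c_𝔞X → X₀ be the associated fibre bundle with fibre Ĝ_𝔞 (the closure of the image of G in M_𝔞). For each orbit H of the G-action on Ĝ_𝔞 (with H given the discrete topology), the associated bundle X_H → X₀ with fibre H is an unbranched covering of X₀, and the natural maps ι_H : X_H → c_𝔞X are injective with pairwise disjoint images whose union is all of c_𝔞X. In particular, as a set, c_𝔞X is the disjoint union over orbits H of the images ι_H(X_H). -/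
open MulAction

section Defs

variable (G : Type) [Group G] {X X₀ Gh : Type}

/-- The orbit of `ω` under the `G`-action, regarded as a type with the *discrete* topology. -/
def OrbitT [MulAction G Gh] (ω : Gh) : Type := {x : Gh // x ∈ MulAction.orbit G ω}

variable [MulAction G Gh]

/-- The value in `Gh` of a point of an orbit. -/
def OrbitT.val {ω : Gh} (x : OrbitT G ω) : Gh := x.1

instance (ω : Gh) : TopologicalSpace (OrbitT G ω) := ⊥

instance (ω : Gh) : DiscreteTopology (OrbitT G ω) := ⟨rfl⟩

instance (ω : Gh) : MulAction G (OrbitT G ω) where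
  smul g x := ⟨g • x.1, by
    obtain ⟨h, hh⟩ := x.2
    exact ⟨g * h, by simp only [] at hh ⊢; rw [← hh, mul_smul]⟩⟩
  one_smul x := Subtype.ext (one_smul G x.1)
  mul_smul g g' x := Subtype.ext (mul_smul g g' x.1)

variable [MulAction G X]

/-- The fibrewise compactification `c_𝔞 X`, realized as the associated bundle
`(X × Gh)/G` of the principal bundle `X → X₀` with fibre `Gh`. -/
def FibComp : Type := Quotient (MulAction.orbitRel G (X × Gh))

instance [TopologicalSpace X] [TopologicalSpace Gh] : TopologicalSpace (FibComp G (X := X) (Gh := Gh)) :=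
  inferInstanceAs (TopologicalSpace (Quotient _))

/-- The covering `X_H` associated to the orbit `H` of `ω`, realized as `(X × H)/G` with `H`
carrying the discrete topology. -/
def XOrb (ω : Gh) : Type := Quotient (MulAction.orbitRel G (X × OrbitT G ω))

instance [TopologicalSpace X] (ω : Gh) : TopologicalSpace (XOrb G (X := X) ω) :=
  inferInstanceAs (TopologicalSpace (Quotient _))

/-- The bundle projection `c_𝔞 X → X₀`. -/
def projE (p : X → X₀) (hreg : ∀ (g : G) (x : X), p (g • x) = p x) :
    FibComp G (X := X) (Gh := Gh) → X₀ :=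
  Quotient.lift (fun z => p z.1) (by
    rintro ⟨x, ω⟩ ⟨y, τ⟩ ⟨g, hg⟩
    have hx : g • y = x := congrArg Prod.fst hg
    simp only [← hx, hreg])

/-- The covering projection `X_H → X₀`. -/
def projOrb (p : X → X₀) (hreg : ∀ (g : G) (x : X), p (g • x) = p x) (ω : Gh) :
    XOrb G (X := X) ω → X₀ :=
  Quotient.lift (fun z => p z.1) (by
    rintro ⟨x, κ⟩ ⟨y, lam⟩ ⟨g, hg⟩
    have hx : g • y = x := congrArg Prod.fst hg
    simp only [← hx, hreg])

/-- The natural map `ι_H : X_H → c_𝔞 X`. -/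
def iotaOrb (ω : Gh) : XOrb G (X := X) ω → FibComp G (X := X) (Gh := Gh) :=
  Quotient.lift (fun z => Quotient.mk (MulAction.orbitRel G (X × Gh)) (z.1, OrbitT.val G z.2))
    (by
      rintro ⟨x, κ⟩ ⟨y, lam⟩ ⟨g, hg⟩
      refine Quotient.sound ⟨g, ?_⟩
      have hx : g • y = x := congrArg Prod.fst hg
      have hκ : g • lam = κ := congrArg Prod.snd hg
      have hval : g • (OrbitT.val G lam) = OrbitT.val G κ := by
        rw [← hκ]; rfl
      exact Prod.ext hx hval)

end Defs

/-!
The deck group acts freely and transitively on the fibres of `p`, and every point of `X` has an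
open neighbourhood `W` disjoint from its nontrivial translates, so `p` is a quotient covering map
for `G`. For a discrete `G`-set `F`, the projection `(X × F)/G → X₀` is then trivial over `p(W)`:
its sheets are the images of the slices `W × {i}`, `i ∈ F`. The statements about the maps `ι_H`
are orbit bookkeeping: the class of `(x, ω)` lies in the image of `ι_H` exactly when `ω ∈ H`.
-/

open MulAction

theorem IsCoveringMap.isClosed_range {E B : Type*} [TopologicalSpace E] [TopologicalSpace B]
    {f : E → B} (hf : IsCoveringMap f) : IsClosed (Set.range f) := by
  rw [← isOpen_compl_iff, isOpen_iff_forall_mem_open]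
  intro b hb
  obtain ⟨-, U, hbU, hU, -, H, -⟩ := hf b
  refine ⟨U, ?_, hU, hbU⟩
  rintro _ hu ⟨e, rfl⟩
  exact hb ⟨_, (H ⟨e, hu⟩).2.2⟩

theorem IsCoveringMap.surjective {E B : Type*} [TopologicalSpace E] [TopologicalSpace B]
    [Nonempty E] [PreconnectedSpace B] {f : E → B} (hf : IsCoveringMap f) :
    Function.Surjective f :=
  Set.range_eq_univ.mp <| IsClopen.eq_univ ⟨hf.isClosed_range, hf.isOpenMap.isOpen_range⟩
    (Set.range_nonempty f)

theorem IsCoveringMap.isQuotientCoveringMap_of_deck {G X X₀ : Type*} [Group G] [TopologicalSpace X]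
    [TopologicalSpace X₀] [MulAction G X] (hcont : ∀ g : G, Continuous (fun x : X => g • x))
    {p : X → X₀} (hp : IsCoveringMap p) (hsurj : Function.Surjective p)
    (hreg : ∀ (g : G) (x : X), p (g • x) = p x)
    (hdeck : ∀ x y : X, p x = p y → ∃! g : G, g • x = y) :
    IsQuotientCoveringMap p G := by
  refine (isQuotientCoveringMap_iff_isCoveringMap_and p G).mpr
    ⟨hp, hsurj, ⟨hcont⟩, ⟨fun g g' x h => ?_⟩, fun {x y} => ⟨fun h => ?_, ?_⟩⟩
  · exact (hdeck x (g • x) (hreg g x).symm).unique rfl h.symm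
  · exact (hdeck y x h.symm).exists
  · rintro ⟨g, rfl⟩
    exact hreg g y

namespace IsQuotientCoveringMap

variable {G X X₀ : Type*} [Group G] [TopologicalSpace X] [TopologicalSpace X₀] [MulAction G X]
  {p : X → X₀}

theorem exists_isOpen_eq_one_of_smul_mem (hp : IsQuotientCoveringMap p G) (x : X) :
    ∃ W : Set X, IsOpen W ∧ x ∈ W ∧ ∀ (g : G) (w : X), w ∈ W → g • w ∈ W → g = 1 := by
  obtain ⟨W, hW, hdisj⟩ := hp.disjoint x
  exact ⟨interior W, isOpen_interior, mem_interior_iff_mem_nhds.mpr hW,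
    fun g w hw hgw => hdisj g ⟨g • w, ⟨w, interior_subset hw, rfl⟩, interior_subset hgw⟩⟩

variable {F : Type*} [TopologicalSpace F] [MulAction G F]
  {π : Quotient (orbitRel G (X × F)) → X₀}

theorem continuous_associatedBundle (hp : IsQuotientCoveringMap p G)
    (hπ : ∀ z, π (Quotient.mk _ z) = p z.1) : Continuous π := by
  rw [isQuotientMap_quotient_mk'.continuous_iff]
  convert hp.isCoveringMap.continuous.comp continuous_fst
  exact funext hπ

theorem isOpenMap_associatedBundle (hp : IsQuotientCoveringMap p G)
    (hπ : ∀ z, π (Quotient.mk _ z) = p z.1) : IsOpenMap π := by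
  intro O hO
  have hπO : π '' O = p '' (Prod.fst '' (Quotient.mk _ ⁻¹' O)) := by
    conv_lhs => rw [← Set.image_preimage_eq O Quotient.mk_surjective]
    simp only [Set.image_image, hπ]
  rw [hπO]
  exact hp.isCoveringMap.isOpenMap _ (isOpenMap_fst _ (hO.preimage continuous_quot_mk))

theorem exists_trivialization_associatedBundle [DiscreteTopology F] [Nonempty F]
    (hp : IsQuotientCoveringMap p G)
    (hπ : ∀ z, π (Quotient.mk _ z) = p z.1) (x₀ : X₀) :
    ∃ t : Bundle.Trivialization F π, x₀ ∈ t.baseSet := by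
  have := hp.toContinuousConstSMul
  have : ContinuousConstSMul G F := ⟨fun _ => continuous_of_discreteTopology⟩
  obtain ⟨x, rfl⟩ := hp.surjective x₀
  obtain ⟨W, hWo, hxW, hW⟩ := hp.exists_isOpen_eq_one_of_smul_mem x
  have hπsurj : Function.Surjective π := fun y => by
    obtain ⟨x, rfl⟩ := hp.surjective y
    exact ⟨Quotient.mk _ (x, Classical.arbitrary F), hπ _⟩
  have : Nonempty (X₀ → Quotient (orbitRel G (X × F))) := ⟨Function.surjInv hπsurj⟩
  let U (i : F) : Set (Quotient (orbitRel G (X × F))) := Quotient.mk _ '' (W ×ˢ {i})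
  have hUo (i : F) : IsOpen (U i) := isOpenMap_quotient_mk'_mul _ (hWo.prod (isOpen_discrete _))
  have hπU (i : F) : π '' U i = p '' W := by
    simp only [U, Set.image_image, hπ]
    rw [← Set.image_image p Prod.fst, Set.fst_image_prod _ (Set.singleton_nonempty i)]
  refine ⟨IsOpen.trivializationDiscrete U (p '' W) (hp.isCoveringMap.isOpenMap W hWo)
    (fun i W' hW' => ⟨fun h => ?_, fun h => ?_⟩) (fun i => ?_) (fun i => ?_) ?_ ?_, x, hxW, rfl⟩
  · exact ((hp.continuous_associatedBundle hπ).isOpen_preimage W' h).inter (hUo i)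
  · have hW'_eq : π '' (π ⁻¹' W' ∩ U i) = W' := by
      rw [Set.image_preimage_inter, hπU, Set.inter_eq_left.mpr hW']
    exact hW'_eq ▸ hp.isOpenMap_associatedBundle hπ _ h
  · rintro _ ⟨⟨w, _⟩, ⟨hw, rfl⟩, rfl⟩ _ ⟨⟨w', _⟩, ⟨hw', rfl⟩, rfl⟩ h
    rw [hπ, hπ] at h
    obtain ⟨g, rfl⟩ := hp.apply_eq_iff_mem_orbit.mp h
    obtain rfl := hW g w' hw' hw
    simp only [one_smul]
  · exact (hπU i).superset
  · intro i j hij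
    refine Set.disjoint_left.mpr ?_
    rintro _ ⟨⟨w, _⟩, ⟨hw, rfl⟩, rfl⟩ ⟨⟨w', _⟩, ⟨hw', rfl⟩, h⟩
    obtain ⟨g, hg⟩ := Quotient.exact h
    have hgw : g • w = w' := congrArg Prod.fst hg
    obtain rfl := hW g w hw (hgw ▸ hw')
    exact hij (by simpa using congrArg Prod.snd hg)
  · rintro ⟨x', k⟩ ⟨w, hw, hpw⟩
    obtain ⟨g, rfl⟩ := hp.apply_eq_iff_mem_orbit.mp (hpw.trans (hπ _))
    exact Set.mem_iUnion.mpr ⟨g • k, (g • x', g • k), ⟨hw, rfl⟩, Quotient.sound ⟨g, rfl⟩⟩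

theorem isCoveringMap_associatedBundle [DiscreteTopology F] (hp : IsQuotientCoveringMap p G)
    (hπ : ∀ z, π (Quotient.mk _ z) = p z.1) : IsCoveringMap π := by
  cases isEmpty_or_nonempty F
  · have : IsEmpty (Quotient (orbitRel G (X × F))) :=
      ⟨fun z => Quotient.inductionOn z fun z => isEmptyElim z.2⟩
    exact .of_isEmpty π
  · exact IsFiberBundle.isCoveringMap (F := F) (hp.exists_trivialization_associatedBundle hπ)

end IsQuotientCoveringMap

section Orbits

variable {G X Gh : Type} [Group G] [MulAction G X] [MulAction G Gh]

theorem iotaOrb_injective (ω : Gh) : Function.Injective (iotaOrb G (X := X) ω) := by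
  rintro ⟨x, κ⟩ ⟨y, lam⟩ h
  obtain ⟨g, hg⟩ := Quotient.exact h
  have hx : g • y = x := congrArg Prod.fst hg
  have hκ : g • lam.1 = κ.1 := congrArg Prod.snd hg
  exact Quotient.sound ⟨g, Prod.ext hx (Subtype.ext hκ)⟩

theorem exists_mem_range_iotaOrb (e : FibComp G (X := X) (Gh := Gh)) :
    ∃ ω : Gh, e ∈ Set.range (iotaOrb G (X := X) ω) := by
  induction e using Quotient.inductionOn with
  | h z => exact ⟨z.2, Quotient.mk _ (z.1, ⟨z.2, mem_orbit_self z.2⟩), rfl⟩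

theorem orbit_eq_of_nonempty_range_iotaOrb_inter {ω ω' : Gh}
    (h : (Set.range (iotaOrb G (X := X) ω) ∩ Set.range (iotaOrb G (X := X) ω')).Nonempty) :
    orbit G ω = orbit G ω' := by
  obtain ⟨_, ⟨⟨x, κ⟩, rfl⟩, ⟨⟨y, lam⟩, h⟩⟩ := h
  obtain ⟨g, hg⟩ := Quotient.exact h
  have hκ : g • κ.1 = lam.1 := congrArg Prod.snd hg
  calc orbit G ω = orbit G κ.1 := (orbit_eq_iff.mpr κ.2).symm
    _ = orbit G lam.1 := by rw [← hκ, orbit_smul]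
    _ = orbit G ω' := orbit_eq_iff.mpr lam.2

end Orbits

theorem stmt_13_general {G X X₀ Gh : Type} [Group G]
    [TopologicalSpace X] [TopologicalSpace X₀]
    [MulAction G X] [MulAction G Gh]
    (hcontX : ∀ g : G, Continuous (fun x : X => g • x))
    (hX₀conn : ConnectedSpace X₀) (hXconn : ConnectedSpace X)
    (p : X → X₀) (hp : IsCoveringMap p)
    (hreg : ∀ (g : G) (x : X), p (g • x) = p x)
    (hdeck : ∀ x y : X, p x = p y → ∃! g : G, g • x = y) :
    (∀ ω : Gh, IsCoveringMap (projOrb G p hreg ω)) ∧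
    (∀ ω : Gh, Function.Injective (iotaOrb G (X := X) ω)) ∧
    (∀ e : FibComp G (X := X) (Gh := Gh), ∃ ω : Gh, e ∈ Set.range (iotaOrb G (X := X) ω)) ∧
    (∀ ω ω' : Gh, (Set.range (iotaOrb G (X := X) ω) ∩ Set.range (iotaOrb G (X := X) ω')).Nonempty →
      MulAction.orbit G ω = MulAction.orbit G ω') := by
  have hquot : IsQuotientCoveringMap p G :=
    hp.isQuotientCoveringMap_of_deck hcontX hp.surjective hreg hdeck
  exact ⟨fun ω => hquot.isCoveringMap_associatedBundle (fun _ => rfl), iotaOrb_injective,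
    exists_mem_range_iotaOrb, fun _ _ => orbit_eq_of_nonempty_range_iotaOrb_inter⟩

/-- for a regular covering `p : X → X₀` with deck group `G` and a
right-translation action of `G` on `Gh = Gh_𝔞`, each associated bundle `X_H → X₀` over an orbit
`H` (with `H` discrete) is a covering of `X₀`, the natural maps `ι_H : X_H → c_𝔞X` are
injective, their images are pairwise disjoint (for distinct orbits), and their union is all of
`c_𝔞X`; so, as a set, `c_𝔞X` is the disjoint union of the `ι_H(X_H)` over the orbits `H`. -/
theorem stmt_13 {G X X₀ Gh : Type} [Group G]
    [TopologicalSpace X] [TopologicalSpace X₀] [TopologicalSpace Gh]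
    [MulAction G X] [MulAction G Gh]
    (hcontX : ∀ g : G, Continuous (fun x : X => g • x))
    (hcontGh : ∀ g : G, Continuous (fun ω : Gh => g • ω))
    (hX₀conn : ConnectedSpace X₀) (hXconn : ConnectedSpace X)
    (p : X → X₀) (hp : IsCoveringMap p)
    (hreg : ∀ (g : G) (x : X), p (g • x) = p x)
    (hdeck : ∀ x y : X, p x = p y → ∃! g : G, g • x = y) :
    (∀ ω : Gh, IsCoveringMap (projOrb G p hreg ω)) ∧
    (∀ ω : Gh, Function.Injective (iotaOrb G (X := X) ω)) ∧
    (∀ e : FibComp G (X := X) (Gh := Gh), ∃ ω : Gh, e ∈ Set.range (iotaOrb G (X := X) ω)) ∧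
    (∀ ω ω' : Gh, (Set.range (iotaOrb G (X := X) ω) ∩ Set.range (iotaOrb G (X := X) ω')).Nonempty →
      MulAction.orbit G ω = MulAction.orbit G ω') :=
  stmt_13_general hcontX hX₀conn hXconn p hp hreg hdeck
end

section
/- Let K be a compact Hausdorff space and L'' ⊂ K a compact subset. Let U₀ ⊂ ℂⁿ be open and let the sheaf O on U₀ × K assign to open sets the continuous functions holomorphic in the first variable. Fix an open polydisk V₀ with compact closure in U₀ and an open set N with compact closure in L''. Then for every function f continuous on a neighborhood of closure(V₀) × closure(N) in U₀ × K and holomorphic in the first variable, and every ε > 0, there exists F continuous on U₀ × K, holomorphic in the first variable, with sup over closure(V₀) × closure(N) of |f − F| < ε. -/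
/-!
Call `g` approximable on `S` if it is a uniform limit on `S` of entire functions. Approximable
functions are closed under sums, products (on compact sets), precomposition with holomorphic maps
and uniform limits, hence also under integrals of continuous families (via Riemann sums). On a
closed polydisk in `ℂⁿ⁺¹`, the Cauchy formula in the first variable writes a holomorphic `g` as
an integral over a circle of products `(w - z₀)⁻¹ · g(w, z')`; the kernel is approximable by its
Taylor polynomials and the slice `g(w, ·)` by induction on `n`. Finally, for the parameter space
`K`, every `η₀ ∈ closure N` has a neighbourhood on which `f` stays uniformly close to an entire
approximant of the slice `f(·, η₀)`, and a partition of unity on `K` subordinate to finitely many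
such neighbourhoods glues these approximants into `F`.
-/

open Complex Metric Set Filter Topology Real

def polydisk {n : ℕ} (c : Fin n → ℂ) (r : Fin n → ℝ) : Set (Fin n → ℂ) :=
  {z | ∀ i, ‖z i - c i‖ < r i}

def ApproxByEntireOn {E : Type*} [NormedAddCommGroup E] [NormedSpace ℂ E]
    (g : E → ℂ) (S : Set E) : Prop :=
  ∀ ε > 0, ∃ P : E → ℂ, Differentiable ℂ P ∧ ∀ z ∈ S, ‖g z - P z‖ ≤ ε

namespace ApproxByEntireOn

variable {E F : Type*} [NormedAddCommGroup E] [NormedSpace ℂ E] [NormedAddCommGroup F]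
  [NormedSpace ℂ F] {g g₁ g₂ : E → ℂ} {S : Set E}

theorem of_differentiable (hg : Differentiable ℂ g) : ApproxByEntireOn g S :=
  fun _ hε => ⟨g, hg, fun z _ => by simpa using hε.le⟩

theorem congr (h : ApproxByEntireOn g₁ S) (hg : EqOn g₁ g₂ S) : ApproxByEntireOn g₂ S := by
  intro ε hε
  obtain ⟨P, hP, hgP⟩ := h ε hε
  exact ⟨P, hP, fun z hz => hg hz ▸ hgP z hz⟩

theorem of_approx (h : ∀ ε > 0, ∃ g', ApproxByEntireOn g' S ∧ ∀ z ∈ S, ‖g z - g' z‖ ≤ ε) :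
    ApproxByEntireOn g S := by
  intro ε hε
  obtain ⟨g', hg', hgg'⟩ := h (ε / 2) (half_pos hε)
  obtain ⟨P, hP, hg'P⟩ := hg' (ε / 2) (half_pos hε)
  refine ⟨P, hP, fun z hz => ?_⟩
  calc ‖g z - P z‖ ≤ ‖g z - g' z‖ + ‖g' z - P z‖ := norm_sub_le_norm_sub_add_norm_sub _ _ _
    _ ≤ ε := by linarith [hgg' z hz, hg'P z hz]

theorem add (h₁ : ApproxByEntireOn g₁ S) (h₂ : ApproxByEntireOn g₂ S) :
    ApproxByEntireOn (fun z => g₁ z + g₂ z) S := by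
  intro ε hε
  obtain ⟨P₁, hP₁, hgP₁⟩ := h₁ (ε / 2) (half_pos hε)
  obtain ⟨P₂, hP₂, hgP₂⟩ := h₂ (ε / 2) (half_pos hε)
  refine ⟨fun z => P₁ z + P₂ z, hP₁.add hP₂, fun z hz => ?_⟩
  calc ‖g₁ z + g₂ z - (P₁ z + P₂ z)‖ = ‖(g₁ z - P₁ z) + (g₂ z - P₂ z)‖ := by ring_nf
    _ ≤ ‖g₁ z - P₁ z‖ + ‖g₂ z - P₂ z‖ := norm_add_le _ _
    _ ≤ ε := by linarith [hgP₁ z hz, hgP₂ z hz]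

theorem const_mul (a : ℂ) (h : ApproxByEntireOn g S) :
    ApproxByEntireOn (fun z => a * g z) S := by
  intro ε hε
  obtain ⟨P, hP, hgP⟩ := h (ε / (‖a‖ + 1)) (by positivity)
  refine ⟨fun z => a * P z, hP.const_mul a, fun z hz => ?_⟩
  calc ‖a * g z - a * P z‖ = ‖a‖ * ‖g z - P z‖ := by rw [← mul_sub, norm_mul]
    _ ≤ (‖a‖ + 1) * (ε / (‖a‖ + 1)) := by
      gcongr
      exacts [le_add_of_nonneg_right zero_le_one, hgP z hz]
    _ = ε := mul_div_cancel₀ ε (by positivity)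

theorem sum {ι : Type*} (t : Finset ι) {g : ι → E → ℂ} (h : ∀ i ∈ t, ApproxByEntireOn (g i) S) :
    ApproxByEntireOn (fun z => ∑ i ∈ t, g i z) S := by
  classical
  induction t using Finset.induction_on with
  | empty => simpa using of_differentiable (differentiable_const 0)
  | insert i t hi ih =>
    simp only [Finset.sum_insert hi]
    exact (h i (Finset.mem_insert_self i t)).add
      (ih fun j hj => h j (Finset.mem_insert_of_mem hj))

theorem exists_bound (hS : IsCompact S) (h : ApproxByEntireOn g S) :
    ∃ M ≥ 0, ∀ z ∈ S, ‖g z‖ ≤ M := by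
  obtain ⟨P, hP, hgP⟩ := h 1 one_pos
  obtain ⟨B, hB⟩ := hS.exists_bound_of_continuousOn hP.continuous.continuousOn
  refine ⟨max B 0 + 1, by positivity, fun z hz => ?_⟩
  calc ‖g z‖ ≤ ‖P z‖ + ‖g z - P z‖ := norm_le_insert' _ _
    _ ≤ max B 0 + 1 := add_le_add ((hB z hz).trans (le_max_left _ _)) (hgP z hz)

theorem mul (hS : IsCompact S) (h₁ : ApproxByEntireOn g₁ S) (h₂ : ApproxByEntireOn g₂ S) :
    ApproxByEntireOn (fun z => g₁ z * g₂ z) S := by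
  intro ε hε
  obtain ⟨M₁, hM₁0, hM₁⟩ := h₁.exists_bound hS
  obtain ⟨M₂, hM₂0, hM₂⟩ := h₂.exists_bound hS
  set η := min 1 (ε / (M₁ + M₂ + 1))
  have hη0 : 0 < η := lt_min one_pos (by positivity)
  obtain ⟨P₁, hP₁, hgP₁⟩ := h₁ η hη0
  obtain ⟨P₂, hP₂, hgP₂⟩ := h₂ η hη0
  refine ⟨fun z => P₁ z * P₂ z, hP₁.mul hP₂, fun z hz => ?_⟩
  have hP₂z : ‖P₂ z‖ ≤ M₂ + 1 := calc
    ‖P₂ z‖ ≤ ‖g₂ z‖ + ‖g₂ z - P₂ z‖ := norm_le_norm_add_norm_sub _ _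
    _ ≤ M₂ + 1 := add_le_add (hM₂ z hz) ((hgP₂ z hz).trans (min_le_left _ _))
  calc ‖g₁ z * g₂ z - P₁ z * P₂ z‖ = ‖g₁ z * (g₂ z - P₂ z) + (g₁ z - P₁ z) * P₂ z‖ := by ring_nf
    _ ≤ M₁ * η + η * (M₂ + 1) := by
      refine (norm_add_le _ _).trans (add_le_add ?_ ?_) <;> rw [norm_mul]
      · exact mul_le_mul (hM₁ z hz) (hgP₂ z hz) (norm_nonneg _) hM₁0
      · exact mul_le_mul (hgP₁ z hz) hP₂z (norm_nonneg _) hη0.le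
    _ = (M₁ + M₂ + 1) * η := by ring
    _ ≤ (M₁ + M₂ + 1) * (ε / (M₁ + M₂ + 1)) := by gcongr; exact min_le_right _ _
    _ = ε := mul_div_cancel₀ ε (by positivity)

theorem comp {T : Set F} {φ : F → E} (h : ApproxByEntireOn g S) (hφ : Differentiable ℂ φ)
    (hT : MapsTo φ T S) : ApproxByEntireOn (fun z => g (φ z)) T := by
  intro ε hε
  obtain ⟨P, hP, hgP⟩ := h ε hε
  exact ⟨fun z => P (φ z), hP.comp hφ, fun z hz => hgP (φ z) (hT hz)⟩

end ApproxByEntireOn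

section RiemannSum

variable {E : Type*} [NormedAddCommGroup E] [NormedSpace ℝ E] [CompleteSpace E]

theorem norm_integral_sub_riemannSum_le {f : ℝ → E} {a b η : ℝ} (hab : a ≤ b) {m : ℕ}
    (hm : 0 < m) (hf : ContinuousOn f (Icc a b))
    (hη : ∀ x ∈ Icc a b, ∀ y ∈ Icc a b, |x - y| ≤ (b - a) / m → ‖f x - f y‖ ≤ η) :
    ‖(∫ x in a..b, f x) - ((b - a) / m) • ∑ l ∈ Finset.range m, f (a + l * ((b - a) / m))‖
      ≤ (b - a) * η := by
  set h := (b - a) / m with hh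
  set p : ℕ → ℝ := fun l => a + l * h
  have hm' : (0 : ℝ) < m := Nat.cast_pos.2 hm
  have hh0 : 0 ≤ h := div_nonneg (sub_nonneg.2 hab) hm'.le
  have hpIcc : ∀ l ≤ m, p l ∈ Icc a b := fun l hl => by
    have : (l : ℝ) * h ≤ m * h := by gcongr
    refine ⟨le_add_of_nonneg_right (by positivity), ?_⟩
    rw [hh, mul_div_cancel₀ _ hm'.ne'] at this
    simp only [p]; linarith
  have hstep : ∀ l, p (l + 1) - p l = h := fun l => by simp only [p]; push_cast; ring
  have hmono : ∀ l, p l ≤ p (l + 1) := fun l => by linarith [hstep l]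
  have hsub : ∀ l < m, Icc (p l) (p (l + 1)) ⊆ Icc a b := fun l hl =>
    Icc_subset_Icc (hpIcc l hl.le).1 (hpIcc (l + 1) hl).2
  have hint : ∀ l < m, IntervalIntegrable f MeasureTheory.volume (p l) (p (l + 1)) := fun l hl =>
    (hf.mono (by rw [uIcc_of_le (hmono l)]; exact hsub l hl)).intervalIntegrable
  have hsplit : (∫ x in a..b, f x) - h • ∑ l ∈ Finset.range m, f (p l)
      = ∑ l ∈ Finset.range m, ∫ x in p l..p (l + 1), (f x - f (p l)) := by
    have hp0 : p 0 = a := by simp [p]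
    have hpm : p m = b := by simp only [p, hh]; field_simp; ring
    rw [← hp0, ← hpm, ← intervalIntegral.sum_integral_adjacent_intervals hint, Finset.smul_sum,
      ← Finset.sum_sub_distrib]
    refine Finset.sum_congr rfl fun l hl => ?_
    rw [intervalIntegral.integral_sub (hint l (Finset.mem_range.1 hl)) intervalIntegrable_const,
      intervalIntegral.integral_const, hstep]
  have hpiece : ∀ l ∈ Finset.range m, ‖∫ x in p l..p (l + 1), (f x - f (p l))‖ ≤ η * h := by
    intro l hl
    have hl := Finset.mem_range.1 hl
    refine (intervalIntegral.norm_integral_le_of_norm_le_const fun x hx => ?_).trans_eq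
      (by rw [hstep, abs_of_nonneg hh0])
    rw [uIoc_of_le (hmono l)] at hx
    refine hη x (hsub l hl (Ioc_subset_Icc_self hx)) (p l) (hpIcc l hl.le) ?_
    rw [abs_of_nonneg (by linarith [hx.1])]
    linarith [hx.2, hstep l]
  calc _ = ‖∑ l ∈ Finset.range m, ∫ x in p l..p (l + 1), (f x - f (p l))‖ := by rw [hsplit]
    _ ≤ ∑ _l ∈ Finset.range m, η * h := (norm_sum_le _ _).trans (Finset.sum_le_sum hpiece)
    _ = (b - a) * η := by
      rw [Finset.sum_const, Finset.card_range, nsmul_eq_mul, hh]; field_simp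

theorem IsCompact.exists_forall_norm_integral_sub_riemannSum_le {α : Type*} [PseudoMetricSpace α]
    {S : Set α} (hS : IsCompact S) {H : α → ℝ → E} {a b : ℝ} (hab : a ≤ b)
    (hH : ContinuousOn (Function.uncurry H) (S ×ˢ Icc a b)) {ε : ℝ} (hε : 0 < ε) :
    ∃ m : ℕ, 0 < m ∧ ∀ z ∈ S, ‖(∫ x in a..b, H z x)
      - ((b - a) / m) • ∑ l ∈ Finset.range m, H z (a + l * ((b - a) / m))‖ ≤ ε := by
  obtain ⟨δ, hδ, hH'⟩ := Metric.uniformContinuousOn_iff.1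
    ((hS.prod isCompact_Icc).uniformContinuousOn_of_continuous hH) (ε / (b - a + 1))
    (by positivity)
  obtain ⟨m, hm⟩ := exists_nat_gt ((b - a) / δ)
  have hm0 : (0 : ℝ) < m := lt_of_le_of_lt (by positivity) hm
  refine ⟨m, Nat.cast_pos.1 hm0, fun z hz => ?_⟩
  refine (norm_integral_sub_riemannSum_le (f := H z) (η := ε / (b - a + 1)) hab
    (Nat.cast_pos.1 hm0)
    (hH.comp (Continuous.prodMk_right z).continuousOn fun x hx => ⟨hz, hx⟩)
    fun x hx y hy hxy => ?_).trans ?_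
  · rw [← dist_eq_norm]
    refine (hH' (z, x) ⟨hz, hx⟩ (z, y) ⟨hz, hy⟩ ?_).le
    rw [Prod.dist_eq, dist_self, Real.dist_eq]
    refine max_lt hδ (hxy.trans_lt ?_)
    rwa [div_lt_iff₀ hm0, mul_comm, ← div_lt_iff₀ hδ]
  · calc (b - a) * (ε / (b - a + 1)) ≤ (b - a + 1) * (ε / (b - a + 1)) := by
          gcongr; linarith
      _ = ε := mul_div_cancel₀ ε (by linarith)

end RiemannSum

namespace ApproxByEntireOn

variable {E : Type*} [NormedAddCommGroup E] [NormedSpace ℂ E] {S : Set E}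

theorem intervalIntegral (hS : IsCompact S) {H : E → ℝ → ℂ} {a b : ℝ} (hab : a ≤ b)
    (hH : ContinuousOn (Function.uncurry H) (S ×ˢ Icc a b))
    (happrox : ∀ x ∈ Icc a b, ApproxByEntireOn (fun z => H z x) S) :
    ApproxByEntireOn (fun z => ∫ x in a..b, H z x) S := by
  refine of_approx fun ε hε => ?_
  obtain ⟨m, hm, hH'⟩ := hS.exists_forall_norm_integral_sub_riemannSum_le hab hH hε
  refine ⟨_, const_mul (((b - a) / m : ℝ) : ℂ) (sum (Finset.range m) fun l hl => happrox _ ?_),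
    fun z hz => by simpa only [Complex.real_smul] using hH' z hz⟩
  have hm' : (0 : ℝ) < m := Nat.cast_pos.2 hm
  have hlm : (l : ℝ) * ((b - a) / m) ≤ b - a := by
    rw [mul_div_left_comm]
    exact mul_le_of_le_one_right (sub_nonneg.2 hab)
      ((div_le_one hm').2 (by exact_mod_cast (Finset.mem_range.1 hl).le))
  exact ⟨le_add_of_nonneg_right (by have := sub_nonneg.2 hab; positivity), by linarith⟩

end ApproxByEntireOn

theorem FormalMultilinearSeries.differentiable_partialSum {𝕜 E F : Type*}
    [NontriviallyNormedField 𝕜] [NormedAddCommGroup E] [NormedSpace 𝕜 E] [NormedAddCommGroup F]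
    [NormedSpace 𝕜 F] (p : FormalMultilinearSeries 𝕜 E F) (k : ℕ) :
    Differentiable 𝕜 (p.partialSum k) := by
  unfold FormalMultilinearSeries.partialSum
  exact Differentiable.fun_sum fun i _ x => ((p i).hasFDerivAt _).differentiableAt.comp x
    (differentiableAt_pi.2 fun _ => differentiableAt_id)

theorem approxByEntireOn_closedBall {f : ℂ → ℂ} {c : ℂ} {R ρ : ℝ} (hR : 0 ≤ R) (hRρ : R < ρ)
    (hf : DifferentiableOn ℂ f (ball c ρ)) : ApproxByEntireOn f (closedBall c R) := by
  obtain ⟨R₁, hRR₁, hR₁ρ⟩ := exists_between hRρ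
  obtain ⟨R₂, hRR₂, hR₂R₁⟩ := exists_between hRR₁
  lift R₁ to NNReal using (hR.trans hRR₁.le)
  lift R₂ to NNReal using (hR.trans hRR₂.le)
  have hps := (hf.mono (closedBall_subset_ball hR₁ρ)).hasFPowerSeriesOnBall (hR.trans_lt hRR₁)
  intro ε hε
  obtain ⟨k, hk⟩ := (Metric.tendstoUniformlyOn_iff.1
    (hps.tendstoUniformlyOn' (ENNReal.coe_lt_coe.2 hR₂R₁)) ε hε).exists
  refine ⟨fun z => (cauchyPowerSeries f c R₁).partialSum k (z - c),
    (FormalMultilinearSeries.differentiable_partialSum _ k).comp (differentiable_id.sub_const c),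
    fun z hz => ?_⟩
  rw [← dist_eq_norm]
  exact (hk z (closedBall_subset_ball hRR₂ hz)).le

def closedPolydisk {ι : Type*} (c : ι → ℂ) (r : ι → ℝ) : Set (ι → ℂ) :=
  univ.pi fun i => closedBall (c i) (r i)

theorem isCompact_closedPolydisk {ι : Type*} (c : ι → ℂ) (r : ι → ℝ) :
    IsCompact (closedPolydisk c r) :=
  isCompact_univ_pi fun _ => isCompact_closedBall _ _

theorem closure_polydisk {n : ℕ} {c : Fin n → ℂ} {r : Fin n → ℝ} (hr : ∀ i, 0 < r i) :
    closure (polydisk c r) = closedPolydisk c r := by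
  have : polydisk c r = univ.pi fun i => ball (c i) (r i) := by
    ext z
    simp [polydisk, dist_eq_norm]
  rw [this, closure_pi_set]
  exact pi_congr rfl fun i _ => closure_ball (c i) (hr i).ne'

theorem exists_closedPolydisk_add_subset {ι : Type*} [Fintype ι] {c : ι → ℂ} {r : ι → ℝ}
    (hr : 0 ≤ r) {Z : Set (ι → ℂ)} (hZ : IsOpen Z) (hcZ : closedPolydisk c r ⊆ Z) :
    ∃ δ > 0, closedPolydisk c (fun i => r i + δ) ⊆ Z := by
  obtain ⟨δ, hδ, hδZ⟩ := (isCompact_closedPolydisk c r).exists_cthickening_subset_open hZ hcZ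
  refine ⟨δ, hδ, fun z hz => hδZ ?_⟩
  have hzi : ∀ i, ∃ y ∈ closedBall (c i) (r i), z i ∈ closedBall y δ := fun i => by
    have : z i ∈ closedBall (c i) (r i + δ) := hz i (mem_univ i)
    rw [add_comm, ← cthickening_closedBall hδ.le (hr i),
      (isCompact_closedBall _ _).cthickening_eq_biUnion_closedBall hδ.le] at this
    simpa using this
  choose y hy hzy using hzi
  exact mem_cthickening_of_dist_le z y δ _ (fun i _ => hy i) ((dist_pi_le_iff hδ.le).2 hzy)

theorem cons_mem_closedPolydisk {n : ℕ} {c : Fin (n + 1) → ℂ} {r : Fin (n + 1) → ℝ} {w : ℂ}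
    {t : Fin n → ℂ} :
    Fin.cons w t ∈ closedPolydisk c r ↔
      w ∈ closedBall (c 0) (r 0) ∧ t ∈ closedPolydisk (Fin.tail c) (Fin.tail r) := by
  simp [closedPolydisk, Fin.forall_fin_succ, Fin.tail]

theorem exists_gt_forall_cons_mem {n : ℕ} {c : Fin (n + 1) → ℂ} {r : Fin (n + 1) → ℝ}
    (hr : 0 ≤ r) {Z : Set (Fin (n + 1) → ℂ)} (hZ : IsOpen Z) (hcZ : closedPolydisk c r ⊆ Z) :
    ∃ ρ > r 0, ∀ w ∈ closedBall (c 0) ρ, ∀ t ∈ closedPolydisk (Fin.tail c) (Fin.tail r),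
      (Fin.cons w t : Fin (n + 1) → ℂ) ∈ Z := by
  obtain ⟨δ, hδ, hδZ⟩ := exists_closedPolydisk_add_subset hr hZ hcZ
  exact ⟨r 0 + δ, lt_add_of_pos_right _ hδ, fun w hw t ht => hδZ (cons_mem_closedPolydisk.2
    ⟨hw, fun i _ => closedBall_subset_closedBall (le_add_of_nonneg_right hδ.le) (ht i trivial)⟩)⟩

theorem eq_two_pi_I_inv_smul_circleIntegral_cons {n : ℕ} {g : (Fin (n + 1) → ℂ) → ℂ}
    {Z : Set (Fin (n + 1) → ℂ)} (hg : DifferentiableOn ℂ g Z) {z : Fin (n + 1) → ℂ} {c₀ : ℂ}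
    {ρ : ℝ} (hz : z 0 ∈ ball c₀ ρ) (hZ : ∀ w ∈ closedBall c₀ ρ, Fin.cons w (Fin.tail z) ∈ Z) :
    g z = (2 * π * I)⁻¹ • ∮ w in C(c₀, ρ), (w - z 0)⁻¹ • g (Fin.cons w (Fin.tail z)) := by
  have hcons : Differentiable ℂ fun w : ℂ => (Fin.cons w (Fin.tail z) : Fin (n + 1) → ℂ) := by
    fun_prop
  have hd : DifferentiableOn ℂ (fun w => g (Fin.cons w (Fin.tail z))) (closedBall c₀ ρ) :=
    hg.comp hcons.differentiableOn hZ
  rw [hd.circleIntegral_sub_inv_smul hz, Fin.cons_self_tail, smul_smul,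
    inv_mul_cancel₀ two_pi_I_ne_zero, one_smul]

theorem continuousOn_circleIntegrand_cons {n : ℕ} {g : (Fin (n + 1) → ℂ) → ℂ}
    {Z : Set (Fin (n + 1) → ℂ)} (hg : ContinuousOn g Z) {S : Set (Fin (n + 1) → ℂ)} {c₀ : ℂ}
    {ρ : ℝ} (hρ : 0 ≤ ρ) (hS : ∀ z ∈ S, z 0 ∉ sphere c₀ ρ)
    (hSZ : ∀ z ∈ S, ∀ w ∈ sphere c₀ ρ, Fin.cons w (Fin.tail z) ∈ Z) :
    ContinuousOn (Function.uncurry fun z θ => deriv (circleMap c₀ ρ) θ •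
      ((circleMap c₀ ρ θ - z 0)⁻¹ • g (Fin.cons (circleMap c₀ ρ θ) (Fin.tail z)))) (S ×ˢ univ) := by
  simp only [Function.uncurry_def, deriv_circleMap, smul_eq_mul]
  refine ContinuousOn.mul (by fun_prop) (ContinuousOn.mul ?_ ?_)
  · refine ContinuousOn.inv₀ (by fun_prop) fun p hp h => hS p.1 hp.1 ?_
    rw [← sub_eq_zero.1 h]
    exact circleMap_mem_sphere c₀ hρ p.2
  · have hcons : Continuous fun p : (Fin (n + 1) → ℂ) × ℝ =>
        (Fin.cons (circleMap c₀ ρ p.2) (Fin.tail p.1) : Fin (n + 1) → ℂ) := by fun_prop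
    exact hg.comp hcons.continuousOn fun p hp => hSZ p.1 hp.1 _ (circleMap_mem_sphere c₀ hρ p.2)

theorem approxByEntireOn_inv_sub {w c : ℂ} {R : ℝ} (hR : 0 ≤ R) (hRw : R < dist w c) :
    ApproxByEntireOn (fun u => (w - u)⁻¹) (closedBall c R) :=
  approxByEntireOn_closedBall hR hRw <|
    ((differentiable_const w).sub differentiable_id).differentiableOn.inv fun u hu h =>
      (mem_ball.1 hu).ne (by rw [show u = w from (sub_eq_zero.1 h).symm])

theorem approxByEntireOn_closedPolydisk {n : ℕ} {c : Fin n → ℂ} {r : Fin n → ℝ} (hr : 0 ≤ r)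
    {Z : Set (Fin n → ℂ)} (hZ : IsOpen Z) (hcZ : closedPolydisk c r ⊆ Z)
    {g : (Fin n → ℂ) → ℂ} (hg : DifferentiableOn ℂ g Z) :
    ApproxByEntireOn g (closedPolydisk c r) := by
  induction n with
  | zero =>
    refine ApproxByEntireOn.of_differentiable ?_
    rw [show g = fun _ => g 0 from funext fun z => congrArg g (Subsingleton.elim z 0)]
    exact differentiable_const _
  | succ n ih =>
    obtain ⟨ρ, hρr, hconsZ⟩ := exists_gt_forall_cons_mem hr hZ hcZ
    set S := closedPolydisk c r
    have hSc : IsCompact S := isCompact_closedPolydisk c r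
    have hρ : 0 ≤ ρ := (hr 0).trans hρr.le
    have hball : closedBall (c 0) (r 0) ⊆ ball (c 0) ρ := closedBall_subset_ball hρr
    have hS : ∀ z ∈ S,
        z 0 ∈ closedBall (c 0) (r 0) ∧ Fin.tail z ∈ closedPolydisk (Fin.tail c) (Fin.tail r) :=
      fun z hz => cons_mem_closedPolydisk.1 ((Fin.cons_self_tail z).symm ▸ hz)
    have hcauchy : EqOn (fun z => (2 * π * I)⁻¹ * ∮ w in C(c 0, ρ),
        (w - z 0)⁻¹ • g (Fin.cons w (Fin.tail z))) g S := fun z hz =>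
      (eq_two_pi_I_inv_smul_circleIntegral_cons hg (hball (hS z hz).1)
        fun w hw => hconsZ w hw _ (hS z hz).2).symm
    have hcont := continuousOn_circleIntegrand_cons hg.continuousOn hρ
      (fun z hz h => (mem_ball.1 (hball (hS z hz).1)).ne (mem_sphere.1 h))
      fun z hz w hw => hconsZ w (sphere_subset_closedBall hw) _ (hS z hz).2
    refine (ApproxByEntireOn.const_mul _ (ApproxByEntireOn.intervalIntegral hSc (by positivity)
      (hcont.mono (prod_mono_right (subset_univ _))) fun θ _ => ?_)).congr hcauchy
    have hkernel : ApproxByEntireOn (fun z : Fin (n + 1) → ℂ => (circleMap (c 0) ρ θ - z 0)⁻¹) S :=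
      (approxByEntireOn_inv_sub (hr 0) ((mem_sphere.1 (circleMap_mem_sphere _ hρ θ)).symm ▸
        hρr)).comp (differentiable_apply 0) fun z hz => (hS z hz).1
    have hslice : ApproxByEntireOn
        (fun z : Fin (n + 1) → ℂ => g (Fin.cons (circleMap (c 0) ρ θ) (Fin.tail z))) S :=
      (ih (fun i => hr i.succ) (hZ.preimage (by fun_prop))
        (fun t ht => hconsZ _ (sphere_subset_closedBall (circleMap_mem_sphere _ hρ θ)) t ht)
        (hg.comp (by fun_prop) fun t ht => ht)).comp
        (differentiable_pi.2 fun i => differentiable_apply i.succ) fun z hz => (hS z hz).2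
    exact (hkernel.mul hSc hslice).const_mul _

theorem IsCompact.exists_mem_nhds_forall_dist_lt {X Y Z : Type*} [TopologicalSpace X]
    [TopologicalSpace Y] [PseudoMetricSpace Z] {S : Set X} (hS : IsCompact S) {W : Set (X × Y)}
    (hW : IsOpen W) {y₀ : Y} (hSW : S ×ˢ {y₀} ⊆ W) {f : X × Y → Z} (hf : ContinuousOn f W)
    {ε : ℝ} (hε : 0 < ε) : ∃ v ∈ 𝓝 y₀, ∀ x ∈ S, ∀ y ∈ v, dist (f (x, y)) (f (x, y₀)) < ε := by
  obtain ⟨u, v, -, hv, hSu, hy₀v, huvW⟩ := generalized_tube_lemma hS isCompact_singleton hW hSW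
  have hf' : ContinuousOn (Function.uncurry fun y x => f (x, y)) (v ×ˢ S) :=
    hf.comp continuous_swap.continuousOn fun p hp => huvW ⟨hSu hp.2, hp.1⟩
  obtain ⟨v', hv', hfv'⟩ := hS.mem_uniformity_of_prod hf' (hy₀v rfl) (dist_mem_uniformity hε)
  exact ⟨v', hv.nhdsWithin_eq (hy₀v rfl) ▸ hv', fun x hx y hy => hfv' y hy x hx⟩

theorem exists_continuous_differentiable_approx_of_forall_nhds {E K : Type*}
    [NormedAddCommGroup E] [NormedSpace ℂ E] [TopologicalSpace K] [NormalSpace K]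
    [ParacompactSpace K] {L : Set K} (hLc : IsCompact L) (hL : IsClosed L) {S : Set E}
    {f : E × K → ℂ} {ε : ℝ}
    (hloc : ∀ η₀ ∈ L, ∃ v ∈ 𝓝 η₀, ∃ P : E → ℂ, Differentiable ℂ P ∧
      ∀ z ∈ S, ∀ η ∈ v, ‖f (z, η) - P z‖ ≤ ε) :
    ∃ F : E × K → ℂ, Continuous F ∧ (∀ η, Differentiable ℂ fun z => F (z, η)) ∧
      ∀ z ∈ S, ∀ η ∈ L, ‖f (z, η) - F (z, η)‖ ≤ ε := by
  choose! v hv P hP hfP using hloc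
  obtain ⟨t, htL, hLt⟩ := hLc.elim_nhds_subcover (fun η => interior (v η))
    fun η hη => interior_mem_nhds.2 (hv η hη)
  obtain ⟨φ, hφ⟩ := PartitionOfUnity.exists_isSubordinate hL (fun i : t => interior (v i))
    (fun _ => isOpen_interior) (by simpa only [iUnion_subtype] using hLt)
  refine ⟨fun p => ∑ i : t, φ i p.2 • P i p.1, ?_, fun η => ?_, fun z hz η hη => ?_⟩
  · exact continuous_finsetSum _ fun i _ => ((φ i).continuous.comp continuous_snd).smul
      ((hP i (htL i i.2)).continuous.comp continuous_fst)
  · exact Differentiable.fun_sum fun i _ => (hP i (htL i i.2)).const_smul (φ i η)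
  · have hconvex := φ.finsum_smul_mem_convex (g := fun i _ => P i z) hη
      (t := closedBall (f (z, η)) ε) ?_ (convex_closedBall _ _)
    · rwa [finsum_eq_sum_of_fintype, mem_closedBall, dist_comm, dist_eq_norm] at hconvex
    · intro i hi
      rw [mem_closedBall, dist_comm, dist_eq_norm]
      exact hfP i (htL i i.2) z hz η (interior_subset (hφ i (subset_closure hi)))

theorem stmt_16_general {K : Type*} [TopologicalSpace K] [CompactSpace K] [T2Space K]
    {n : ℕ} (U₀ : Set (Fin n → ℂ))
    (c : Fin n → ℂ) (r : Fin n → ℝ) (hr : ∀ i, 0 < r i)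
    (N : Set K)
    (W : Set ((Fin n → ℂ) × K)) (hWopen : IsOpen W)
    (hWnbhd : (closure (polydisk c r)) ×ˢ (closure N) ⊆ W)
    (f : (Fin n → ℂ) × K → ℂ)
    (hfcont : ContinuousOn f W)
    (hfhol : ∀ η : K, DifferentiableOn ℂ (fun z => f (z, η)) {z | (z, η) ∈ W})
    (ε : ℝ) (hε : 0 < ε) :
    ∃ F : (Fin n → ℂ) × K → ℂ,
      ContinuousOn F (U₀ ×ˢ (Set.univ : Set K)) ∧
      (∀ η : K, DifferentiableOn ℂ (fun z => F (z, η)) U₀) ∧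
      ∀ q ∈ (closure (polydisk c r)) ×ˢ (closure N), ‖f q - F q‖ < ε := by
  rw [closure_polydisk hr] at hWnbhd ⊢
  have hlocal : ∀ η₀ ∈ closure N, ∃ v ∈ 𝓝 η₀, ∃ P : (Fin n → ℂ) → ℂ, Differentiable ℂ P ∧
      ∀ z ∈ closedPolydisk c r, ∀ η ∈ v, ‖f (z, η) - P z‖ ≤ ε / 2 := by
    intro η₀ hη₀
    have hslice : closedPolydisk c r ⊆ {z | (z, η₀) ∈ W} := fun z hz => hWnbhd ⟨hz, hη₀⟩
    obtain ⟨P, hP, hfP⟩ := approxByEntireOn_closedPolydisk (fun i => (hr i).le)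
      (hWopen.preimage (by fun_prop)) hslice (hfhol η₀) (ε / 4) (by positivity)
    obtain ⟨v, hv, hfv⟩ := (isCompact_closedPolydisk c r).exists_mem_nhds_forall_dist_lt hWopen
      (by rintro ⟨z, η⟩ ⟨hz, rfl⟩; exact hslice hz) hfcont (ε := ε / 4) (by positivity)
    refine ⟨v, hv, P, hP, fun z hz η hη => ?_⟩
    calc ‖f (z, η) - P z‖ ≤ ‖f (z, η) - f (z, η₀)‖ + ‖f (z, η₀) - P z‖ :=
          norm_sub_le_norm_sub_add_norm_sub _ _ _
      _ ≤ ε / 2 := by linarith [dist_eq_norm (f (z, η)) (f (z, η₀)) ▸ hfv z hz η hη, hfP z hz]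
  obtain ⟨F, hFc, hFd, hfF⟩ := exists_continuous_differentiable_approx_of_forall_nhds
    isClosed_closure.isCompact isClosed_closure hlocal
  exact ⟨F, hFc.continuousOn, fun η => (hFd η).differentiableOn,
    fun q hq => (hfF q.1 hq.1 q.2 hq.2).trans_lt (half_lt_self hε)⟩

/-- Runge-type approximation for functions holomorphic in the first variable on
`U₀ × K` (`K` compact Hausdorff).  If `f` is continuous and holomorphic in the first variable
on a neighbourhood `W` of `closure V₀ × closure N` (with `V₀ ⋐ U₀` an open polydisk and `N` an
open set with closure contained in a compact `L'' ⊆ K`), then for every `ε > 0` there is an `F`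
continuous on `U₀ × K` and holomorphic in the first variable with
`sup_{closure V₀ × closure N} |f − F| < ε`. -/
theorem stmt_16 {K : Type*} [TopologicalSpace K] [CompactSpace K] [T2Space K]
    (L'' : Set K) (hL'' : IsCompact L'')
    {n : ℕ} (U₀ : Set (Fin n → ℂ)) (hU₀ : IsOpen U₀)
    (c : Fin n → ℂ) (r : Fin n → ℝ) (hr : ∀ i, 0 < r i)
    (hV₀ : closure (polydisk c r) ⊆ U₀)
    (N : Set K) (hNopen : IsOpen N) (hNL : closure N ⊆ L'')
    (W : Set ((Fin n → ℂ) × K)) (hWopen : IsOpen W)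
    (hWsub : W ⊆ U₀ ×ˢ (Set.univ : Set K))
    (hWnbhd : (closure (polydisk c r)) ×ˢ (closure N) ⊆ W)
    (f : (Fin n → ℂ) × K → ℂ)
    (hfcont : ContinuousOn f W)
    (hfhol : ∀ η : K, DifferentiableOn ℂ (fun z => f (z, η)) {z | (z, η) ∈ W})
    (ε : ℝ) (hε : 0 < ε) :
    ∃ F : (Fin n → ℂ) × K → ℂ,
      ContinuousOn F (U₀ ×ˢ (Set.univ : Set K)) ∧
      (∀ η : K, DifferentiableOn ℂ (fun z => F (z, η)) U₀) ∧
      ∀ q ∈ (closure (polydisk c r)) ×ˢ (closure N), ‖f q - F q‖ < ε :=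
  stmt_16_general U₀ c r hr N W hWopen hWnbhd f hfcont hfhol ε hε
end

section
/- Let R be a commutative ring, and consider square matrices over R. Given k₁ × k₁, k₂ × k₁, k₁ × k₂ matrices as follows: ψ a k₂ × k₁ matrix and φ a k₁ × k₂ matrix over R, the block matrix H := [[I, φ],[0, I]] · [[I, 0],[ψ, I]]⁻¹ = [[I, φ],[0, I]] · [[I, 0],[−ψ, I]] is invertible (with k := k₁ + k₂), and if α₁ is a row of k₁ maps and α₂ a row of k₂ maps into a module satisfying α₁ = α₂ψ and α₂ = α₁φ (as module homomorphisms R^{k₁} → M and R^{k₂} → M), then α₁ π₁ H = α₂ π₂, where π₁, π₂ are the projections R^{k₁+k₂} → R^{k₁}, R^{k₂}. Moreover H_t := [[I, tφ],[0, I]] · [[I, 0],[−tψ, I]] gives a path of invertible matrices from the identity (t = 0) to H (t = 1). -/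
/-!
`H = [[1, φ], [0, 1]] · [[1, 0], [-ψ, 1]] = [[1 - φψ, φ], [-ψ, 1]]` is a product of unitriangular
block matrices, each of determinant one, hence invertible for every scaling of `φ` and `ψ`.
Its first block row sends `(v₁, v₂)` to `v₁ - φψ v₁ + φ v₂`, and applying `α₁` the terms
`α₁ v₁ = α₂ (ψ v₁) = α₁ (φψ v₁)` cancel, leaving `α₁ (φ v₂) = α₂ v₂`.
-/

open Matrix

namespace Matrix

variable {R n m : Type*} [Fintype n] [Fintype m] [DecidableEq n] [DecidableEq m]

theorem fromBlocks_zero₁₂_one_mul [NonAssocSemiring R] (C C' : Matrix m n R) :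
    fromBlocks (1 : Matrix n n R) 0 C (1 : Matrix m m R) * fromBlocks 1 0 C' 1 =
      fromBlocks 1 0 (C + C') 1 := by
  simp [fromBlocks_multiply, add_comm]

variable [CommRing R]

theorem isUnit_fromBlocks_zero₁₂_one (C : Matrix m n R) :
    IsUnit (fromBlocks (1 : Matrix n n R) 0 C (1 : Matrix m m R)) := by
  simp [isUnit_iff_isUnit_det]

theorem isUnit_fromBlocks_zero₂₁_one (B : Matrix n m R) :
    IsUnit (fromBlocks (1 : Matrix n n R) B 0 (1 : Matrix m m R)) := by
  simp [isUnit_iff_isUnit_det]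

end Matrix

theorem amalgamation_fst_mulVec {R M n m : Type*} [CommRing R] [AddCommGroup M] [Module R M]
    [Fintype n] [Fintype m] [DecidableEq n] [DecidableEq m]
    (ψ : Matrix m n R) (φ : Matrix n m R) (α₁ : (n → R) →ₗ[R] M) (α₂ : (m → R) →ₗ[R] M)
    (hψ : ∀ v, α₁ v = α₂ (ψ *ᵥ v)) (hφ : ∀ v, α₂ v = α₁ (φ *ᵥ v)) (v : n ⊕ m → R) :
    α₁ (((fromBlocks 1 φ 0 1 * fromBlocks 1 0 (-ψ) 1) *ᵥ v) ∘ Sum.inl) = α₂ (v ∘ Sum.inr) := by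
  rw [← mulVec_mulVec, fromBlocks_mulVec, fromBlocks_mulVec]
  simp only [Sum.elim_comp_inl, Sum.elim_comp_inr, one_mulVec, zero_mulVec, zero_add,
    neg_mulVec, map_add, map_neg, add_zero, ← hφ, ← hψ]
  abel

/-- the amalgamation matrix construction.  Over a commutative ring `R`, given
matrices `ψ` (size `k₂ × k₁`) and `φ` (size `k₁ × k₂`), the block matrix
`H = [[I, φ],[0, I]] · [[I, 0],[ψ, I]]⁻¹ = [[I, φ],[0, I]] · [[I, 0],[−ψ, I]]` is invertible,
and if `α₁, α₂` are module maps with `α₁ = α₂ ∘ ψ` and `α₂ = α₁ ∘ φ`, then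
`α₁ ∘ π₁ ∘ H = α₂ ∘ π₂`.  Moreover `H_t = [[I, tφ],[0, I]] · [[I, 0],[−tψ, I]]` is a path of
invertible matrices from the identity to `H`. -/
theorem stmt_18 {R : Type*} [CommRing R] {Mod : Type*} [AddCommGroup Mod] [Module R Mod]
    {k₁ k₂ : ℕ}
    (ψ : Matrix (Fin k₂) (Fin k₁) R) (φ : Matrix (Fin k₁) (Fin k₂) R)
    (α₁ : (Fin k₁ → R) →ₗ[R] Mod) (α₂ : (Fin k₂ → R) →ₗ[R] Mod)
    (hψ : ∀ v : Fin k₁ → R, α₁ v = α₂ (ψ.mulVec v))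
    (hφ : ∀ v : Fin k₂ → R, α₂ v = α₁ (φ.mulVec v)) :
    let A : Matrix (Sum (Fin k₁) (Fin k₂)) (Sum (Fin k₁) (Fin k₂)) R := fromBlocks 1 φ 0 1
    let Bplus : Matrix (Sum (Fin k₁) (Fin k₂)) (Sum (Fin k₁) (Fin k₂)) R := fromBlocks 1 0 ψ 1
    let Bminus : Matrix (Sum (Fin k₁) (Fin k₂)) (Sum (Fin k₁) (Fin k₂)) R :=
      fromBlocks 1 0 (-ψ) 1
    let H : Matrix (Sum (Fin k₁) (Fin k₂)) (Sum (Fin k₁) (Fin k₂)) R := A * Bminus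
    let Ht : R → Matrix (Sum (Fin k₁) (Fin k₂)) (Sum (Fin k₁) (Fin k₂)) R := fun t =>
      (fromBlocks 1 (t • φ) 0 1 : Matrix (Sum (Fin k₁) (Fin k₂)) (Sum (Fin k₁) (Fin k₂)) R) *
      (fromBlocks 1 0 (-(t • ψ)) 1 : Matrix (Sum (Fin k₁) (Fin k₂)) (Sum (Fin k₁) (Fin k₂)) R)
    -- `[[I,0],[−ψ,I]]` is a two-sided inverse of `[[I,0],[ψ,I]]`:
    (Bplus * Bminus = 1 ∧ Bminus * Bplus = 1) ∧
    -- `H` is invertible: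
    IsUnit H ∧
    -- `α₁ π₁ H = α₂ π₂`:
    (∀ v : Sum (Fin k₁) (Fin k₂) → R,
      α₁ (fun i => (H.mulVec v) (Sum.inl i)) = α₂ (fun i => v (Sum.inr i))) ∧
    -- the path `H_t` of invertible matrices from the identity to `H`:
    (Ht 0 = 1 ∧ Ht 1 = H ∧ ∀ t : R, IsUnit (Ht t)) := by
  intro A Bplus Bminus H Ht
  have isUnit_Ht (t : R) : IsUnit (Ht t) :=
    (isUnit_fromBlocks_zero₂₁_one _).mul (isUnit_fromBlocks_zero₁₂_one _)
  have Ht_one : Ht 1 = H := by simp [Ht, H, A, Bminus]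
  refine ⟨⟨?_, ?_⟩, Ht_one ▸ isUnit_Ht 1, fun v => ?_, by simp [Ht], Ht_one, isUnit_Ht⟩
  · simp [Bplus, Bminus, fromBlocks_zero₁₂_one_mul]
  · simp [Bplus, Bminus, fromBlocks_zero₁₂_one_mul]
  · exact amalgamation_fst_mulVec ψ φ α₁ α₂ hψ hφ v
end
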